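/- Let G be a finite directed graph with self-loops at every node and Λ a matrix with strictly positive entries exactly on the edges of G, ρ(Λ) < 1. Let Σ = ω ∑_{k≥0} (Λᵀ)^k Λ^k with ω > 0. Then (ΣΛ)_{ij} = 0 if and only if i and j do not belong to a common maximal class of G. -/

import Mathlib

open Matrix

/-- The spectral radius of a real square matrix: the supremum of the absolute
values of its complex eigenvalues. -/
noncomputable def specRad {m : Type*} [Fintype m] [DecidableEq m]
    (A : Matrix m m ℝ) : ℝ :=
  sSup ((fun z : ℂ => ‖z‖) '' spectrum ℂ (A.map Complex.ofReal))

/-- A node `s` is a *source node* of the directed graph `E` if the strongly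
connected component of `s` has no incoming edge from outside, i.e. every node
that reaches `s` is reached back from `s`. -/
def IsSourceNode {V : Type*} (E : V → V → Prop) (s : V) : Prop :=
  ∀ v, Relation.ReflTransGen E v s → Relation.ReflTransGen E s v

/-- `i` and `j` belong to a common maximal class: there is a source node `s`
with directed paths to both `i` and `j`. -/
def CommonMaxClass {V : Type*} (E : V → V → Prop) (i j : V) : Prop :=
  ∃ s, IsSourceNode E s ∧ Relation.ReflTransGen E s i ∧ Relation.ReflTransGen E s j

/-- The set of maximal classes of a directed graph: sets of all nodes reachable
from some source node. -/
def maximalClassesOf {V : Type*} (E : V → V → Prop) : Set (Set V) :=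
  { S | ∃ s, IsSourceNode E s ∧ S = {v | Relation.ReflTransGen E s v} }

section Aux

open Filter
open scoped NNReal ENNReal

attribute [local instance] Matrix.linftyOpNormedRing Matrix.linftyOpNormedAlgebra

private lemma entry_le_linfty {n : ℕ} (M : Matrix (Fin n) (Fin n) ℂ) (a b : Fin n) :
    ‖M a b‖ ≤ ‖M‖ := by
  rw [Matrix.linfty_opNorm_def]
  have h1 : ‖M a b‖₊ ≤ ∑ j, ‖M a j‖₊ :=
    Finset.single_le_sum (f := fun j => ‖M a j‖₊) (fun _ _ => zero_le) (Finset.mem_univ b)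
  have h2 : (∑ j, ‖M a j‖₊) ≤ (Finset.univ : Finset (Fin n)).sup fun i => ∑ j, ‖M i j‖₊ :=
    Finset.le_sup (f := fun i => ∑ j, ‖M i j‖₊) (Finset.mem_univ a)
  exact_mod_cast h1.trans h2

private lemma geom_bound {n : ℕ} (L : Matrix (Fin n) (Fin n) ℝ)
    (hρ : sSup ((fun z : ℂ => ‖z‖) '' spectrum ℂ (L.map Complex.ofReal)) < 1) :
    ∃ C : ℝ, 0 ≤ C ∧ ∃ r : ℝ, 0 ≤ r ∧ r < 1 ∧ ∀ (k : ℕ) (a b : Fin n),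
      |(L ^ k) a b| ≤ C * r ^ k := by
  classical
  haveI : CompleteSpace (Matrix (Fin n) (Fin n) ℂ) :=
    inferInstance
  set A : Matrix (Fin n) (Fin n) ℂ := L.map Complex.ofReal with hA
  have hAmap : A = Complex.ofRealHom.mapMatrix L := rfl
  have hApow : ∀ k : ℕ, A ^ k = (L ^ k).map Complex.ofReal := by
    intro k
    rw [hAmap, ← map_pow]
    rfl
  have hsr : spectralRadius ℂ A < 1 := by
    have hbdd : ∀ z ∈ spectrum ℂ A, ‖z‖ ≤ sSup ((fun z : ℂ => ‖z‖) '' spectrum ℂ A) := by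
      intro z hz
      obtain ⟨R, hR⟩ := Bornology.IsBounded.exists_norm_le (E := ℂ) (spectrum.isBounded A)
      have hb : BddAbove ((fun z : ℂ => ‖z‖) '' spectrum ℂ A) := by
        refine ⟨R, ?_⟩
        rintro _ ⟨w, hw, rfl⟩
        exact hR w hw
      exact le_csSup hb ⟨z, hz, rfl⟩
    have hle : spectralRadius ℂ A ≤ ENNReal.ofReal (sSup ((fun z : ℂ => ‖z‖) '' spectrum ℂ A)) := by
      rw [spectralRadius]
      refine iSup₂_le fun z hz => ?_
      rw [← ENNReal.ofReal_coe_nnreal, coe_nnnorm]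
      exact ENNReal.ofReal_le_ofReal (hbdd z hz)
    exact lt_of_le_of_lt hle (ENNReal.ofReal_lt_one.mpr hρ)
  obtain ⟨r, hr1, hr2⟩ := ENNReal.lt_iff_exists_nnreal_btwn.mp hsr
  set r' : ℝ≥0 := max r (1/2) with hr'
  have hr'pos : (0 : ℝ) < (r' : ℝ) := by
    have : (1/2 : ℝ≥0) ≤ r' := le_max_right _ _
    have h05 : (0 : ℝ≥0) < 1/2 := by norm_num
    exact_mod_cast lt_of_lt_of_le h05 this
  have hr'lt : (r' : ℝ) < 1 := by
    have hrlt : (r : ℝ) < 1 := by exact_mod_cast hr2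
    have hco : (r' : ℝ) = max (r : ℝ) ((1/2 : ℝ≥0) : ℝ) := NNReal.coe_max _ _
    rw [hco]
    refine max_lt hrlt (by norm_num)
  have hsr' : spectralRadius ℂ A < (r' : ℝ≥0∞) :=
    lt_of_lt_of_le hr1 (ENNReal.coe_le_coe.mpr (le_max_left _ _))
  have htend := spectrum.pow_nnnorm_pow_one_div_tendsto_nhds_spectralRadius A
  have heve : ∀ᶠ k : ℕ in atTop, (‖A ^ k‖₊ : ℝ≥0∞) ^ (1 / (k : ℝ)) < (r' : ℝ≥0∞) :=
    htend.eventually_lt_const hsr'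
  obtain ⟨N, hN⟩ := heve.exists_forall_of_atTop
  have hkey : ∀ k : ℕ, N + 1 ≤ k → ‖A ^ k‖ ≤ (r' : ℝ) ^ k := by
    intro k hk
    have hk0 : (k : ℝ) ≠ 0 := Nat.cast_ne_zero.mpr (by omega)
    have h1 : (‖A ^ k‖₊ : ℝ≥0∞) ^ (1 / (k : ℝ)) ≤ (r' : ℝ≥0∞) :=
      (hN k (by omega)).le
    have h2 : ((‖A ^ k‖₊ : ℝ≥0∞) ^ (1 / (k : ℝ))) ^ (k : ℕ) ≤ (r' : ℝ≥0∞) ^ (k : ℕ) :=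
      pow_le_pow_left' h1 k
    have h3 : ((‖A ^ k‖₊ : ℝ≥0∞) ^ (1 / (k : ℝ))) ^ (k : ℕ) = (‖A ^ k‖₊ : ℝ≥0∞) := by
      rw [← ENNReal.rpow_natCast ((‖A ^ k‖₊ : ℝ≥0∞) ^ (1 / (k : ℝ))) k,
        ← ENNReal.rpow_mul, one_div, inv_mul_cancel₀ hk0, ENNReal.rpow_one]
    rw [h3] at h2
    have h4 : ‖A ^ k‖₊ ≤ r' ^ k := by exact_mod_cast h2
    calc ‖A ^ k‖ = ((‖A ^ k‖₊ : ℝ≥0) : ℝ) := rfl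
    _ ≤ ((r' ^ k : ℝ≥0) : ℝ) := by exact_mod_cast h4
    _ = (r' : ℝ) ^ k := by push_cast; ring
  have hsum_nn : (0:ℝ) ≤ ∑ k ∈ Finset.range (N + 1), ‖A ^ k‖ / (r' : ℝ) ^ k :=
    Finset.sum_nonneg fun k _ => div_nonneg (norm_nonneg _) (by positivity)
  have hC1 : (1 : ℝ) ≤ 1 + ∑ k ∈ Finset.range (N + 1), ‖A ^ k‖ / (r' : ℝ) ^ k := by linarith
  refine ⟨1 + ∑ k ∈ Finset.range (N + 1), ‖A ^ k‖ / (r' : ℝ) ^ k, by linarith, (r' : ℝ),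
    hr'pos.le, hr'lt, fun k a b => ?_⟩
  have hentry : |(L ^ k) a b| ≤ ‖A ^ k‖ := by
    have : ‖(A ^ k) a b‖ ≤ ‖A ^ k‖ := entry_le_linfty _ a b
    rw [hApow k, Matrix.map_apply, Complex.norm_real, Real.norm_eq_abs] at this
    rwa [hApow k]
  refine hentry.trans ?_
  rcases le_or_gt (N + 1) k with hk | hk
  · have h1 : ‖A ^ k‖ ≤ (r' : ℝ) ^ k := hkey k hk
    have hp := pow_pos hr'pos k
    nlinarith
  · have hmem : k ∈ Finset.range (N + 1) := Finset.mem_range.mpr hk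
    have h1 : ‖A ^ k‖ / (r' : ℝ) ^ k ≤ 1 + ∑ k ∈ Finset.range (N + 1), ‖A ^ k‖ / (r' : ℝ) ^ k := by
      have := Finset.single_le_sum (f := fun k => ‖A ^ k‖ / (r' : ℝ) ^ k)
        (fun i _ => div_nonneg (norm_nonneg _) (by positivity)) hmem
      linarith
    have hp := pow_pos hr'pos k
    calc ‖A ^ k‖ = (‖A ^ k‖ / (r' : ℝ) ^ k) * (r' : ℝ) ^ k := by
          field_simp
    _ ≤ (1 + ∑ k ∈ Finset.range (N + 1), ‖A ^ k‖ / (r' : ℝ) ^ k) * (r' : ℝ) ^ k :=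
          mul_le_mul_of_nonneg_right h1 hp.le

private lemma exists_source {n : ℕ} (E : Fin n → Fin n → Prop) (l : Fin n) :
    ∃ s, IsSourceNode E s ∧ Relation.ReflTransGen E s l := by
  classical
  suffices h : ∀ (m : ℕ) (l : Fin n),
      (Finset.univ.filter fun u => Relation.ReflTransGen E u l).card ≤ m →
      ∃ s, IsSourceNode E s ∧ Relation.ReflTransGen E s l from
    h _ l le_rfl
  intro m
  induction m with
  | zero =>
    intro l h
    exfalso
    have hm : l ∈ Finset.univ.filter fun u => Relation.ReflTransGen E u l := by
      simp [Relation.ReflTransGen.refl]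
    have := Finset.card_pos.mpr ⟨l, hm⟩
    omega
  | succ m ih =>
    intro l h
    by_cases hs : IsSourceNode E l
    · exact ⟨l, hs, Relation.ReflTransGen.refl⟩
    · rw [IsSourceNode] at hs
      push_neg at hs
      obtain ⟨v, hvl, hlv⟩ := hs
      have hsub : (Finset.univ.filter fun u => Relation.ReflTransGen E u v) ⊂
          Finset.univ.filter fun u => Relation.ReflTransGen E u l := by
        refine Finset.ssubset_iff_of_subset ?_ |>.mpr ?_
        · intro u hu
          simp only [Finset.mem_filter, Finset.mem_univ, true_and] at hu ⊢
          exact hu.trans hvl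
        · exact ⟨l, by simp [Relation.ReflTransGen.refl], by simpa using hlv⟩
      have hcard := Finset.card_lt_card hsub
      obtain ⟨s, hs1, hs2⟩ := ih v (by omega)
      exact ⟨s, hs1, hs2.trans hvl⟩

private lemma common_iff {n : ℕ} (E : Fin n → Fin n → Prop) (i j : Fin n) :
    CommonMaxClass E i j ↔
      ∃ l, Relation.ReflTransGen E l i ∧ Relation.ReflTransGen E l j := by
  constructor
  · rintro ⟨s, _, hi, hj⟩; exact ⟨s, hi, hj⟩
  · rintro ⟨l, hi, hj⟩
    obtain ⟨s, hs, hsl⟩ := exists_source E l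
    exact ⟨s, hs, hsl.trans hi, hsl.trans hj⟩

variable {n : ℕ} {E : Fin n → Fin n → Prop} {L : Matrix (Fin n) (Fin n) ℝ}

private lemma L_nonneg (hpos : ∀ i j, E i j → 0 < L i j)
    (hzero : ∀ i j, ¬ E i j → L i j = 0) : ∀ a b, 0 ≤ L a b := by
  intro a b
  by_cases h : E a b
  · exact (hpos a b h).le
  · simp [hzero a b h]

private lemma pow_entry_nonneg (hpos : ∀ i j, E i j → 0 < L i j)
    (hzero : ∀ i j, ¬ E i j → L i j = 0) :
    ∀ (k : ℕ) (a b : Fin n), 0 ≤ (L ^ k) a b := by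
  intro k
  induction k with
  | zero => intro a b; rw [pow_zero, Matrix.one_apply]; split <;> norm_num
  | succ k ih =>
    intro a b
    rw [pow_succ, Matrix.mul_apply]
    exact Finset.sum_nonneg fun c _ => mul_nonneg (ih a c) (L_nonneg hpos hzero c b)

private lemma pow_pos_of_reach (hpos : ∀ i j, E i j → 0 < L i j)
    (hzero : ∀ i j, ¬ E i j → L i j = 0) :
    ∀ {l i : Fin n}, Relation.ReflTransGen E l i → ∃ k : ℕ, 0 < (L ^ k) l i := by
  intro l i h
  induction h with
  | refl => exact ⟨0, by simp [Matrix.one_apply]⟩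
  | @tail b c hbm hmi ih =>
    obtain ⟨k, hk⟩ := ih
    refine ⟨k + 1, ?_⟩
    rw [pow_succ, Matrix.mul_apply]
    have hterm : 0 < (L ^ k) l b * L b c := mul_pos hk (hpos _ _ hmi)
    refine lt_of_lt_of_le hterm ?_
    refine Finset.single_le_sum (f := fun x => (L ^ k) l x * L x c) ?_ (Finset.mem_univ b)
    intro x _
    exact mul_nonneg (pow_entry_nonneg hpos hzero k l x) (L_nonneg hpos hzero x c)

private lemma reach_of_pow_pos (hpos : ∀ i j, E i j → 0 < L i j)
    (hzero : ∀ i j, ¬ E i j → L i j = 0) :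
    ∀ (k : ℕ) {l i : Fin n}, 0 < (L ^ k) l i → Relation.ReflTransGen E l i := by
  intro k
  induction k with
  | zero =>
    intro l i h
    rw [pow_zero, Matrix.one_apply] at h
    split at h
    · subst ‹l = i›; exact Relation.ReflTransGen.refl
    · norm_num at h
  | succ k ih =>
    intro l i h
    rw [pow_succ, Matrix.mul_apply] at h
    obtain ⟨c, _, hc⟩ := Finset.exists_lt_of_sum_lt
      (by simpa using h : (∑ _c : Fin n, (0:ℝ)) < ∑ c, (L ^ k) l c * L c i)
    have h1 : 0 < (L ^ k) l c * L c i := hc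
    have h2 : 0 < (L ^ k) l c := by
      rcases lt_or_eq_of_le (pow_entry_nonneg hpos hzero k l c) with h' | h'
      · exact h'
      · rw [← h'] at h1; simp at h1
    have h3 : 0 < L c i := by
      rcases lt_or_eq_of_le (L_nonneg hpos hzero c i) with h' | h'
      · exact h'
      · rw [← h'] at h1; simp at h1
    have hE : E c i := by
      by_contra hE
      rw [hzero c i hE] at h3; exact lt_irrefl _ h3
    exact (ih h2).tail hE

private lemma pow_pos_mono (hloop : ∀ i, E i i) (hpos : ∀ i j, E i j → 0 < L i j)
    (hzero : ∀ i j, ¬ E i j → L i j = 0) :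
    ∀ {l i : Fin n} {a : ℕ}, 0 < (L ^ a) l i → ∀ b, a ≤ b → 0 < (L ^ b) l i := by
  intro l i a ha b hab
  induction b, hab using Nat.le_induction with
  | base => exact ha
  | succ b _ ih =>
    rw [pow_succ', Matrix.mul_apply]
    have hterm : 0 < L l l * (L ^ b) l i := mul_pos (hpos _ _ (hloop l)) ih
    refine lt_of_lt_of_le hterm ?_
    refine Finset.single_le_sum (f := fun x => L l x * (L ^ b) x i) ?_ (Finset.mem_univ l)
    intro x _
    exact mul_nonneg (L_nonneg hpos hzero l x) (pow_entry_nonneg hpos hzero b x i)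

end Aux

/-- with `S = ω • ∑ (Lᵀ)^k L^k` the stationary covariance of a
graph with self-loops and positive weights exactly on its edges,
`(S L) i j = 0` iff `i` and `j` do not belong to a common maximal class. -/
theorem stmt11 {n : ℕ} (E : Fin n → Fin n → Prop) (L : Matrix (Fin n) (Fin n) ℝ)
    (hloop : ∀ i, E i i)
    (hpos : ∀ i j, E i j → 0 < L i j)
    (hzero : ∀ i j, ¬ E i j → L i j = 0)
    (hρ : specRad L < 1) (ω : ℝ) (hω : 0 < ω) :
    ∀ i j : Fin n,
      ((ω • ∑' k : ℕ, (Lᵀ) ^ k * L ^ k : Matrix (Fin n) (Fin n) ℝ) * L) i j = 0 ↔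
        ¬ CommonMaxClass E i j := by
  classical
  obtain ⟨C, hC, r, hr0, hr1, hbound⟩ := geom_bound L hρ
  set f : ℕ → Matrix (Fin n) (Fin n) ℝ := fun k => (Lᵀ) ^ k * L ^ k with hf
  have hf_apply : ∀ (k : ℕ) (a b : Fin n), f k a b = ∑ l, (L ^ k) l a * (L ^ k) l b := by
    intro k a b
    rw [hf]
    simp only [Matrix.mul_apply]
    refine Finset.sum_congr rfl fun l _ => ?_
    rw [← Matrix.transpose_pow, Matrix.transpose_apply]
  -- geometric bound on entries of f
  have hr2lt : r ^ 2 < 1 := by nlinarith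
  have habs : ∀ (k : ℕ) (a b : Fin n), |f k a b| ≤ ((n : ℝ) * C ^ 2) * (r ^ 2) ^ k := by
    intro k a b
    rw [hf_apply k a b]
    calc |∑ l, (L ^ k) l a * (L ^ k) l b| ≤ ∑ l, |(L ^ k) l a * (L ^ k) l b| :=
          Finset.abs_sum_le_sum_abs _ _
    _ ≤ ∑ _l : Fin n, (C * r ^ k) * (C * r ^ k) := by
        refine Finset.sum_le_sum fun l _ => ?_
        rw [abs_mul]
        exact mul_le_mul (hbound k l a) (hbound k l b) (abs_nonneg _)
          (le_trans (abs_nonneg _) (hbound k l a))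
    _ = ((n : ℝ) * C ^ 2) * (r ^ 2) ^ k := by
        rw [Finset.sum_const, Finset.card_univ, Fintype.card_fin, nsmul_eq_mul]
        ring
  have hgeo : Summable fun k : ℕ => ((n : ℝ) * C ^ 2) * (r ^ 2) ^ k :=
    (summable_geometric_of_lt_one (by positivity) hr2lt).mul_left _
  have hsum_ent : ∀ a b, Summable fun k => f k a b := fun a b =>
    Summable.of_norm_bounded hgeo fun k => by
      rw [Real.norm_eq_abs]; exact habs k a b
  have hfs1 : ∀ a, Summable fun k => f k a := fun a =>
    Pi.summable.mpr fun b => hsum_ent a b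
  have hfs : Summable f := Pi.summable.mpr hfs1
  have hTapp : ∀ a b, (∑' k, f k) a b = ∑' k, f k a b := by
    intro a b
    have h1 : (∑' k, f k) a = ∑' k, f k a := tsum_apply hfs
    rw [h1, tsum_apply (hfs1 a)]
  intro i j
  -- rewrite the LHS
  have hmain : ((ω • ∑' k : ℕ, (Lᵀ) ^ k * L ^ k) * L) i j = ω * ∑' k, (f k * L) i j := by
    rw [Matrix.mul_apply]
    have hstep : ∀ l, (ω • ∑' k, f k) i l * L l j = ω * ∑' k, f k i l * L l j := by
      intro l
      rw [Matrix.smul_apply, hTapp i l, smul_eq_mul, mul_assoc, ← tsum_mul_right]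
    calc ∑ l, (ω • ∑' k, f k) i l * L l j = ∑ l, ω * ∑' k, f k i l * L l j :=
          Finset.sum_congr rfl fun l _ => hstep l
    _ = ω * ∑ l, ∑' k, f k i l * L l j := by rw [Finset.mul_sum]
    _ = ω * ∑' k, ∑ l, f k i l * L l j := by
        congr 1
        exact (Summable.tsum_finsetSum fun l _ => (hsum_ent i l).mul_right _).symm
    _ = ω * ∑' k, (f k * L) i j := by
        refine congrArg (fun x => ω * x) (tsum_congr fun k => ?_)
        rw [Matrix.mul_apply]
  have hu : ∀ k, (f k * L) i j = ∑ l, (L ^ k) l i * (L ^ (k + 1)) l j := by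
    intro k
    have h1 : f k * L = (Lᵀ) ^ k * L ^ (k + 1) := by rw [hf, mul_assoc, ← pow_succ]
    rw [h1, Matrix.mul_apply]
    refine Finset.sum_congr rfl fun l _ => ?_
    rw [← Matrix.transpose_pow, Matrix.transpose_apply]
  have hu_nn : ∀ k, (0:ℝ) ≤ (f k * L) i j := by
    intro k
    rw [hu k]
    exact Finset.sum_nonneg fun l _ =>
      mul_nonneg (pow_entry_nonneg hpos hzero k l i) (pow_entry_nonneg hpos hzero (k+1) l j)
  have husum : Summable fun k => (f k * L) i j := by
    refine Summable.congr (f := fun k => ∑ l, f k i l * L l j) ?_ ?_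
    · exact summable_sum fun l _ => (hsum_ent i l).mul_right _
    · intro k; rw [Matrix.mul_apply]
  -- zero iff all terms vanish
  have hiff1 : ((ω • ∑' k : ℕ, (Lᵀ) ^ k * L ^ k) * L) i j = 0 ↔
      ∀ (k : ℕ) (l : Fin n), (L ^ k) l i * (L ^ (k + 1)) l j = 0 := by
    rw [hmain, mul_eq_zero]
    constructor
    · rintro (h | h)
      · exact absurd h hω.ne'
      · intro k l
        have hzero_k : ∀ k, (f k * L) i j = 0 := by
          intro k
          by_contra hk
          have hk' : 0 < (f k * L) i j := lt_of_le_of_ne (hu_nn k) (Ne.symm hk)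
          have := Summable.tsum_pos husum hu_nn k hk'
          exact this.ne' h
        have := hzero_k k
        rw [hu k] at this
        have hterm := (Finset.sum_eq_zero_iff_of_nonneg fun l _ =>
          mul_nonneg (pow_entry_nonneg hpos hzero k l i)
            (pow_entry_nonneg hpos hzero (k+1) l j)).mp this
        exact hterm l (Finset.mem_univ l)
    · intro h
      right
      have : ∀ k, (f k * L) i j = 0 := by
        intro k
        rw [hu k]
        exact Finset.sum_eq_zero fun l _ => h k l
      rw [tsum_congr this, tsum_zero]
  rw [hiff1, common_iff]
  constructor
  · rintro h ⟨l, hli, hlj⟩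
    obtain ⟨a, ha⟩ := pow_pos_of_reach hpos hzero hli
    obtain ⟨b, hb⟩ := pow_pos_of_reach hpos hzero hlj
    have h1 : 0 < (L ^ (max a b)) l i :=
      pow_pos_mono hloop hpos hzero ha _ (le_max_left a b)
    have h2 : 0 < (L ^ (max a b + 1)) l j :=
      pow_pos_mono hloop hpos hzero hb _ ((le_max_right a b).trans (Nat.le_succ _))
    have := h (max a b) l
    nlinarith
  · intro h k l
    by_contra hne
    have h1 : 0 < (L ^ k) l i := by
      rcases lt_or_eq_of_le (pow_entry_nonneg hpos hzero k l i) with h' | h'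
      · exact h'
      · exact absurd (by rw [← h']; ring) hne
    have h2 : 0 < (L ^ (k + 1)) l j := by
      rcases lt_or_eq_of_le (pow_entry_nonneg hpos hzero (k+1) l j) with h' | h'
      · exact h'
      · exact absurd (by rw [← h']; ring) hne
    exact h ⟨l, reach_of_pow_pos hpos hzero k h1, reach_of_pow_pos hpos hzero (k+1) h2⟩
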